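/- Let G be a finite simple graph, K a field, and I_G the edge ideal of G. If G has an odd cycle on distinct vertices v_1, …, v_{2n−1}, then the monomial f = x_{v_1} x_{v_2} ⋯ x_{v_{2n−1}} lies in I_G^{(n)} but not in I_G^n. -/

import Mathlib

/-- The `n`-th symbolic power of an ideal `I`:
`I^{(n)} = ⋂_{𝔭 ∈ Min(I)} (I^n R_𝔭 ∩ R)`, the intersection over the minimal primes `𝔭`
of `I` of the preimages in `R` of `I^n R_𝔭` under the localization maps. -/
noncomputable def symbolicPower {R : Type*} [CommRing R] (I : Ideal R) (n : ℕ) : Ideal R :=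
  ⨅ (P : Ideal R) (hP : P ∈ I.minimalPrimes),
    haveI : P.IsPrime := hP.1.1
    (Ideal.map (algebraMap R (Localization.AtPrime P)) (I ^ n)).comap
      (algebraMap R (Localization.AtPrime P))

/-- The edge ideal of a simple graph `G`: the ideal of `K[x_v : v ∈ V]` generated by the
monomials `x_u * x_v` over all edges `{u, v}` of `G`. -/
noncomputable def edgeIdeal (K : Type*) [Field K] {V : Type*} (G : SimpleGraph V) :
    Ideal (MvPolynomial V K) :=
  Ideal.span {m | ∃ u v, G.Adj u v ∧ m = MvPolynomial.X u * MvPolynomial.X v}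

/-!
Every monomial of `I_G^n` has degree at least `2n`, so `f`, of degree `2n - 1`, is not in `I_G^n`.

For `f ∈ I_G^{(n)}` it suffices to find, for each minimal prime `P` of `I_G`, a variable
`x_y ∉ P` with `x_y f ∈ I_G^n`. If `y` lies on the cycle, start the cycle at `y`: then
`x_y f = (x_y x_{v_1}) (x_{v_2} x_{v_3}) ⋯ (x_{v_{2n-2}} x_y)` is a product of `n` edges.
Otherwise all cycle variables lie in `P`; if all neighbours `y` of a cycle vertex `v` had
`x_y ∈ P`, the variables `x_w ∈ P` with `w ≠ v` would generate a prime containing `I_G`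
strictly inside `P`. So some neighbour `y` of `v` has `x_y ∉ P`, and starting the cycle at `v`,
`x_y f = (x_y x_v) (x_{v_1} x_{v_2}) ⋯` is again a product of `n` edges.
-/

open MvPolynomial

namespace MvPolynomial

variable {σ R : Type*} [CommRing R]

theorem isPrime_span_X_image [IsDomain R] (s : Set σ) :
    (Ideal.span (X '' s : Set (MvPolynomial σ R))).IsPrime := by
  classical
  set φ : MvPolynomial σ R →ₐ[R] MvPolynomial σ R := aeval fun i => if i ∈ s then 0 else X i
  have sub_mem : ∀ f, f - φ f ∈ Ideal.span (X '' s) := by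
    intro f
    induction f using MvPolynomial.induction_on with
    | C a => simp [φ]
    | add p q hp hq => simpa [add_sub_add_comm] using add_mem hp hq
    | mul_X p i hp =>
      have hi : X i - φ (X i) ∈ Ideal.span (X '' s) := by
        by_cases h : i ∈ s
        · simpa [φ, h] using Ideal.subset_span (Set.mem_image_of_mem X h)
        · simp [φ, h]
      rw [map_mul, show p * X i - φ p * φ (X i) = (p - φ p) * X i + φ p * (X i - φ (X i)) by ring]
      exact add_mem (Ideal.mul_mem_right _ _ hp) (Ideal.mul_mem_left _ _ hi)
  have ker_eq : RingHom.ker φ = Ideal.span (X '' s) := by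
    refine le_antisymm (fun f hf => ?_) (Ideal.span_le.mpr ?_)
    · simpa [(RingHom.mem_ker).mp hf] using sub_mem f
    · rintro _ ⟨i, hi, rfl⟩
      simp [φ, hi]
  exact ker_eq ▸ RingHom.ker_isPrime φ

theorem X_notMem_span_X_image [Nontrivial R] {s : Set σ} {i : σ} (hi : i ∉ s) :
    (X i : MvPolynomial σ R) ∉ Ideal.span (X '' s) := by
  classical
  rw [mem_ideal_span_X_image]
  intro h
  obtain ⟨j, hj, hij⟩ := h (Finsupp.single i 1) (by simp [support_X])
  rw [Finsupp.single_apply_ne_zero] at hij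
  exact hi (hij.1 ▸ hj)

theorem prod_map_X_notMem_pow_idealOfVars [Nontrivial R] {L : List σ} {n : ℕ}
    (h : L.length < n) : (L.map X).prod ∉ idealOfVars σ R ^ n := by
  have monomial_form : ∀ L : List σ,
      ∃ d, (L.map X).prod = monomial d (1 : R) ∧ d.degree = L.length := by
    intro L
    induction L with
    | nil => exact ⟨0, by simp⟩
    | cons i L ih =>
      obtain ⟨d, hd, hdeg⟩ := ih
      refine ⟨Finsupp.single i 1 + d, ?_, ?_⟩
      · rw [List.map_cons, List.prod_cons, hd, X, monomial_mul, one_mul]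
      · simp [hdeg, add_comm]
  obtain ⟨d, hd, hdeg⟩ := monomial_form L
  rw [hd, monomial_mem_pow_idealOfVars_iff _ _ one_ne_zero, hdeg]
  exact h.not_ge

end MvPolynomial

theorem IsLocalization.algebraMap_mem_map_of_mul_mem {R S : Type*} [CommRing R] [CommRing S]
    [Algebra R S] {M : Submonoid R} [IsLocalization M S] {I : Ideal R} {s f : R} (hs : s ∈ M)
    (h : s * f ∈ I) : algebraMap R S f ∈ I.map (algebraMap R S) :=
  (IsLocalization.mem_map_algebraMap_iff M S).mpr
    ⟨(⟨s * f, h⟩, ⟨s, hs⟩), by simp [← map_mul, mul_comm]⟩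

theorem mem_symbolicPower_of_forall_minimalPrimes {R : Type*} [CommRing R] {I : Ideal R}
    {n : ℕ} {f : R} (h : ∀ P ∈ I.minimalPrimes, ∃ s ∉ P, s * f ∈ I ^ n) :
    f ∈ symbolicPower I n := by
  simp only [symbolicPower, Submodule.mem_iInf, Ideal.mem_comap]
  intro P hP
  have := hP.1.1
  obtain ⟨s, hs, hsf⟩ := h P hP
  exact IsLocalization.algebraMap_mem_map_of_mul_mem (M := P.primeCompl) hs hsf

namespace SimpleGraph

variable {K V : Type*} [Field K] {G : SimpleGraph V}

theorem X_mul_X_mem_edgeIdeal {a b : V} (h : G.Adj a b) :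
    (X a * X b : MvPolynomial V K) ∈ edgeIdeal K G :=
  Ideal.subset_span ⟨a, b, h, rfl⟩

theorem edgeIdeal_le_span_X_image {C : Set V} (hC : G.IsVertexCover C) :
    edgeIdeal K G ≤ Ideal.span (X '' C) := by
  refine Ideal.span_le.mpr ?_
  rintro _ ⟨a, b, hab, rfl⟩
  rcases hC hab with ha | hb
  · exact Ideal.mul_mem_right _ _ (Ideal.subset_span ⟨a, ha, rfl⟩)
  · exact Ideal.mul_mem_left _ _ (Ideal.subset_span ⟨b, hb, rfl⟩)

theorem edgeIdeal_le_idealOfVars_sq : edgeIdeal K G ≤ idealOfVars V K ^ 2 := by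
  refine Ideal.span_le.mpr ?_
  rintro _ ⟨a, b, -, rfl⟩
  rw [sq]
  exact Ideal.mul_mem_mul (Ideal.subset_span ⟨a, rfl⟩) (Ideal.subset_span ⟨b, rfl⟩)

theorem prod_map_X_notMem_edgeIdeal_pow {L : List V} {n : ℕ} (h : L.length < 2 * n) :
    (L.map X).prod ∉ edgeIdeal K G ^ n := fun hL =>
  prod_map_X_notMem_pow_idealOfVars h <| by
    rw [pow_mul]
    exact Ideal.pow_right_mono edgeIdeal_le_idealOfVars_sq n hL

theorem exists_adj_X_notMem_of_mem_minimalPrimes {P : Ideal (MvPolynomial V K)}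
    (hP : P ∈ (edgeIdeal K G).minimalPrimes) {v : V} (hv : X v ∈ P) :
    ∃ y, G.Adj v y ∧ X y ∉ P := by
  by_contra! hN
  have hPprime := hP.1.1
  set C := {w | w ≠ v ∧ (X w : MvPolynomial V K) ∈ P}
  have hC : G.IsVertexCover C := by
    intro a b hab
    by_cases ha : a = v
    · subst ha
      exact Or.inr ⟨(G.ne_of_adj hab).symm, hN b hab⟩
    by_cases hb : b = v
    · subst hb
      exact Or.inl ⟨G.ne_of_adj hab, hN a hab.symm⟩
    rcases hPprime.mem_or_mem (hP.1.2 (X_mul_X_mem_edgeIdeal hab)) with h | h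
    exacts [Or.inl ⟨ha, h⟩, Or.inr ⟨hb, h⟩]
  have hCP : Ideal.span (X '' C) ≤ P := Ideal.span_le.mpr <| by
    rintro _ ⟨w, hw, rfl⟩
    exact hw.2
  have hPC := hP.2 ⟨isPrime_span_X_image C, edgeIdeal_le_span_X_image hC⟩ hCP
  exact X_notMem_span_X_image (fun h => h.1 rfl) (hPC hv)

namespace Walk

theorem prod_X_support_tail_mem_edgeIdeal_pow :
    ∀ {a b : V} (p : G.Walk a b) {m : ℕ}, p.length = 2 * m →
      (p.support.tail.map (X : V → MvPolynomial V K)).prod ∈ edgeIdeal K G ^ m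
  | _, _, .nil, m, h => by
    obtain rfl : m = 0 := by simp at h; omega
    simp
  | _, _, .cons _ .nil, _, h => by simp at h; omega
  | _, _, .cons _ (.cons hbc q), m, h => by
    obtain ⟨k, rfl⟩ : ∃ k, m = k + 1 := ⟨m - 1, by simp at h; omega⟩
    have hq := prod_X_support_tail_mem_edgeIdeal_pow q (m := k) (by simp at h; omega)
    rw [support_cons, support_cons, List.tail_cons, ← q.cons_tail_support, List.map_cons,
      List.map_cons, List.prod_cons, List.prod_cons, ← mul_assoc, pow_succ']
    exact Ideal.mul_mem_mul (X_mul_X_mem_edgeIdeal hbc) hq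

theorem X_mul_prod_X_support_mem_edgeIdeal_pow {y a b : V} (hy : G.Adj y a) (p : G.Walk a b)
    {m : ℕ} (h : p.length = 2 * m) :
    X y * (p.support.map (X : V → MvPolynomial V K)).prod ∈ edgeIdeal K G ^ (m + 1) := by
  rw [← p.cons_tail_support, List.map_cons, List.prod_cons, ← mul_assoc, pow_succ']
  exact Ideal.mul_mem_mul (X_mul_X_mem_edgeIdeal hy) (p.prod_X_support_tail_mem_edgeIdeal_pow h)

variable {u : V} {m : ℕ}

theorem X_mul_prod_X_support_tail_mem_edgeIdeal_pow_of_adj {y : V} (w : G.Walk u u)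
    (hw : w.length = 2 * m + 1) (hy : G.Adj u y) :
    X y * (w.support.tail.map (X : V → MvPolynomial V K)).prod ∈ edgeIdeal K G ^ (m + 1) := by
  cases w with
  | nil => simp at hw
  | cons h p =>
    have := X_mul_prod_X_support_mem_edgeIdeal_pow (K := K) hy.symm p.reverse (m := m)
      (by simp at hw ⊢; omega)
    simpa [support_reverse, List.prod_reverse] using this

theorem X_mul_prod_X_support_tail_mem_edgeIdeal_pow_of_start (w : G.Walk u u)
    (hw : w.length = 2 * m + 1) :
    X u * (w.support.tail.map (X : V → MvPolynomial V K)).prod ∈ edgeIdeal K G ^ (m + 1) := by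
  cases w with
  | nil => simp at hw
  | cons h p => simpa using X_mul_prod_X_support_mem_edgeIdeal_pow h p (by simp at hw; omega)

theorem X_mul_prod_X_support_tail_mem_edgeIdeal_pow_of_mem_support {v : V} (w : G.Walk u u)
    (hw : w.length = 2 * m + 1) (hv : v ∈ w.support) :
    X v * (w.support.tail.map (X : V → MvPolynomial V K)).prod ∈ edgeIdeal K G ^ (m + 1) := by
  classical
  rw [← ((w.support_rotate v hv).perm.map X).prod_eq]
  exact (w.rotate v hv).X_mul_prod_X_support_tail_mem_edgeIdeal_pow_of_start (by simpa using hw)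

theorem exists_X_notMem_mul_prod_X_support_tail_mem_edgeIdeal_pow (w : G.Walk u u)
    (hw : w.length = 2 * m + 1) {P : Ideal (MvPolynomial V K)}
    (hP : P ∈ (edgeIdeal K G).minimalPrimes) :
    ∃ s ∉ P, s * (w.support.tail.map X).prod ∈ edgeIdeal K G ^ (m + 1) := by
  by_cases h : ∀ v ∈ w.support, X v ∈ P
  · obtain ⟨y, hy, hyP⟩ := exists_adj_X_notMem_of_mem_minimalPrimes hP (h u w.start_mem_support)
    exact ⟨X y, hyP, w.X_mul_prod_X_support_tail_mem_edgeIdeal_pow_of_adj hw hy⟩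
  · obtain ⟨v, hv, hvP⟩ : ∃ v ∈ w.support, X v ∉ P := by simpa using h
    exact ⟨X v, hvP, w.X_mul_prod_X_support_tail_mem_edgeIdeal_pow_of_mem_support hw hv⟩

end Walk

end SimpleGraph

theorem prod_mem_symbolicPower_not_mem_pow_of_odd_cycle_general {K V : Type*} [Field K]
    (G : SimpleGraph V) (n : ℕ) (hn : 0 < n)
    (u : V) (w : G.Walk u u) (hlen : w.length = 2 * n - 1) :
    (w.support.tail.map (fun x => (MvPolynomial.X x : MvPolynomial V K))).prod ∈
        symbolicPower (edgeIdeal K G) n ∧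
      (w.support.tail.map (fun x => (MvPolynomial.X x : MvPolynomial V K))).prod ∉
        edgeIdeal K G ^ n := by
  obtain ⟨m, rfl⟩ : ∃ m, n = m + 1 := ⟨n - 1, by omega⟩
  have hodd : w.length = 2 * m + 1 := by omega
  refine ⟨mem_symbolicPower_of_forall_minimalPrimes fun P hP =>
    w.exists_X_notMem_mul_prod_X_support_tail_mem_edgeIdeal_pow hodd hP, ?_⟩
  refine SimpleGraph.prod_map_X_notMem_edgeIdeal_pow ?_
  rw [List.length_tail, SimpleGraph.Walk.length_support]
  omega

/-- If a finite simple graph `G` has an odd cycle on `2n - 1` distinct vertices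
`v_1, …, v_{2n-1}`, then the monomial `f = x_{v_1} ⋯ x_{v_{2n-1}}` lies in `I_G^{(n)}`
but not in `I_G^n`.  (The distinct vertices of the cycle are exactly the entries of
`w.support.tail` for a cycle walk `w`.) -/
theorem prod_mem_symbolicPower_not_mem_pow_of_odd_cycle {K V : Type*} [Field K] [Fintype V]
    [DecidableEq V] (G : SimpleGraph V) (n : ℕ) (hn : 0 < n)
    (u : V) (w : G.Walk u u) (hw : w.IsCycle) (hlen : w.length = 2 * n - 1) :
    (w.support.tail.map (fun x => (MvPolynomial.X x : MvPolynomial V K))).prod ∈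
        symbolicPower (edgeIdeal K G) n ∧
      (w.support.tail.map (fun x => (MvPolynomial.X x : MvPolynomial V K))).prod ∉
        edgeIdeal K G ^ n :=
  prod_mem_symbolicPower_not_mem_pow_of_odd_cycle_general G n hn u w hlen
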